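/- Monotonicity of the solution space: if G₁ = Z₁ᵀD₁ and G₂ = [Z₁; Z₂]ᵀ[D₁; D₂] are gradients from batches where the second batch contains the first (row-wise block concatenation), and D₁, [D₁; D₂] both have full row rank, then range(G₁) ⊆ range(G₂). -/

import Mathlib

open Matrix MeasureTheory

theorem stmt_16 (b₁ b₂ n m : ℕ)
    (Z₁ : Matrix (Fin b₁) (Fin n) ℝ) (Z₂ : Matrix (Fin b₂) (Fin n) ℝ)
    (D₁ : Matrix (Fin b₁) (Fin m) ℝ) (D₂ : Matrix (Fin b₂) (Fin m) ℝ)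
    (hD₁ : D₁.rank = b₁) (hD : (Matrix.fromRows D₁ D₂).rank = b₁ + b₂) (hbm : b₁ + b₂ ≤ m)
    (G₁ : Matrix (Fin n) (Fin m) ℝ) (hG₁ : G₁ = Z₁ᵀ * D₁)
    (G₂ : Matrix (Fin n) (Fin m) ℝ)
    (hG₂ : G₂ = (Matrix.fromRows Z₁ Z₂)ᵀ * Matrix.fromRows D₁ D₂) :
    LinearMap.range G₁.mulVecLin ≤ LinearMap.range G₂.mulVecLin := by
  -- The matrix fromRows D₁ D₂ has full row rank, hence mulVecLin is surjective.
  have hsurj : Function.Surjective (Matrix.fromRows D₁ D₂).mulVecLin := by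
    rw [← LinearMap.range_eq_top]
    apply Submodule.eq_top_of_finrank_eq
    rw [← Matrix.rank, hD]
    simp [Module.finrank_pi]
  rintro x ⟨v, rfl⟩
  obtain ⟨w, hw⟩ := hsurj (Sum.elim (D₁.mulVec v) 0)
  refine ⟨w, ?_⟩
  simp only [Matrix.mulVecLin_apply] at hw ⊢
  rw [hG₂, ← Matrix.mulVec_mulVec, hw, Matrix.transpose_fromRows,
    Matrix.fromCols_mulVec_sumElim, hG₁, ← Matrix.mulVec_mulVec]
  simp
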